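/- arXiv:1310.1879 — 5 statements merged into one kernel-verified Lean document; each statement's English description precedes it below -/
import Mathlib

section
/- Let G be a simple graph whose vertex set is partitioned as V = K ∪ I, where K induces a clique of size s in G and I is an independent set in G, and let B be the bipartite graph on the same vertex set whose edge set consists exactly of the edges of G with one endpoint in K and one endpoint in I. Then m(G) = Σ_{k≥0} m_k(B) · m(K_{s−k}), where K_t denotes the complete graph on t vertices. -/
open Classical

/-- The set of matchings of a simple graph `G`: sets of pairwise non-incident edges
(the empty set counts). -/
noncomputable def graphMatchings {V : Type*} [Fintype V] (G : SimpleGraph V) :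
    Finset (Finset (Sym2 V)) :=
  G.edgeFinset.powerset.filter fun M => ∀ e ∈ M, ∀ f ∈ M, e ≠ f → ∀ v : V, v ∈ e → v ∉ f

/-- `m(G)`: the total number of matchings in `G`. -/
noncomputable def mCount {V : Type*} [Fintype V] (G : SimpleGraph V) : ℕ :=
  (graphMatchings G).card

/-- `m_k(G)`: the number of matchings of size `k` in `G`. -/
noncomputable def mkCount {V : Type*} [Fintype V] (G : SimpleGraph V) (k : ℕ) : ℕ :=
  ((graphMatchings G).filter fun M => M.card = k).card

/-!
Every matching of `G` splits uniquely into its edges meeting `I`, which form a matching of `B`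
(as `I` is independent), and its edges inside `K`, which form a matching of the complete graph
on the vertices of `K` left uncovered by the first part. Since every edge of `B` has exactly one
endpoint in `K`, a `k`-matching of `B` covers exactly `k` vertices of `K`, so the second part
ranges over the matchings of a copy of `K_{s-k}`.
-/

open Finset

section

variable {V W : Type*}

def IsEdgeMatching (M : Finset (Sym2 V)) : Prop :=
  (M : Set (Sym2 V)).Pairwise fun e f => ∀ v ∈ e, v ∉ f

lemma mem_graphMatchings [Fintype V] {G : SimpleGraph V} {M : Finset (Sym2 V)} :
    M ∈ graphMatchings G ↔ (M : Set (Sym2 V)) ⊆ G.edgeSet ∧ IsEdgeMatching M := by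
  rw [graphMatchings, mem_filter, mem_powerset, ← coe_subset, SimpleGraph.coe_edgeFinset]
  rfl

lemma isEdgeMatching_image [DecidableEq W] {f : V → W} (hf : f.Injective)
    {M : Finset (Sym2 V)} : IsEdgeMatching (M.image (Sym2.map f)) ↔ IsEdgeMatching M := by
  rw [IsEdgeMatching, coe_image, (Sym2.map.injective hf).injOn.pairwise_image]
  refine Iff.of_eq (congrArg _ (funext₂ fun e e' => ?_))
  simp only [Function.onFun, Sym2.mem_map]
  grind

lemma graphMatchings_map [Fintype V] [Fintype W] (f : V ↪ W) (G : SimpleGraph V) :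
    graphMatchings (G.map f) = (graphMatchings G).image (image (Sym2.map f)) := by
  ext M
  simp only [mem_image, mem_graphMatchings, SimpleGraph.edgeSet_map, subset_set_image_iff]
  constructor
  · rintro ⟨⟨N, hN, rfl⟩, hM⟩
    exact ⟨N, ⟨hN, (isEdgeMatching_image f.injective).1 hM⟩, rfl⟩
  · rintro ⟨N, ⟨hN, hNM⟩, rfl⟩
    exact ⟨⟨N, hN, rfl⟩, (isEdgeMatching_image f.injective).2 hNM⟩

lemma mCount_map [Fintype V] [Fintype W] (f : V ↪ W) (G : SimpleGraph V) :
    mCount (G.map f) = mCount G := by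
  rw [mCount, graphMatchings_map, mCount,
    card_image_of_injective _ (image_injective (Sym2.map.injective f.injective))]

def completeOn (S : Finset V) : SimpleGraph V :=
  SimpleGraph.fromEdgeSet (S.sym2 : Set (Sym2 V))

lemma mem_edgeSet_completeOn {S : Finset V} {e : Sym2 V} :
    e ∈ (completeOn S).edgeSet ↔ (∀ v ∈ e, v ∈ S) ∧ ¬ e.IsDiag := by
  rw [completeOn, SimpleGraph.edgeSet_fromEdgeSet, Set.mem_sdiff, mem_coe, mem_sym2_iff]
  rfl

lemma completeOn_adj {S : Finset V} {x y : V} :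
    (completeOn S).Adj x y ↔ (x ∈ S ∧ y ∈ S) ∧ x ≠ y := by
  rw [completeOn, SimpleGraph.fromEdgeSet_adj, mem_coe, mk_mem_sym2_iff]

lemma completeOn_eq_map_top (S : Finset V) :
    completeOn S = (⊤ : SimpleGraph (Fin #S)).map
      (S.equivFin.symm.toEmbedding.trans (Function.Embedding.subtype _)) := by
  ext x y
  simp only [completeOn_adj, SimpleGraph.map_adj, SimpleGraph.top_adj]
  constructor
  · rintro ⟨⟨hx, hy⟩, hne⟩
    exact ⟨S.equivFin ⟨x, hx⟩, S.equivFin ⟨y, hy⟩, by simpa using hne, by simp, by simp⟩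
  · rintro ⟨u, v, huv, rfl, rfl⟩
    exact ⟨⟨coe_mem _, coe_mem _⟩, by simpa using huv⟩

lemma mCount_completeOn [Fintype V] (S : Finset V) :
    mCount (completeOn S) = mCount (⊤ : SimpleGraph (Fin #S)) := by
  rw [completeOn_eq_map_top, mCount_map]

noncomputable def coveredVerts [Fintype V] (M : Finset (Sym2 V)) : Finset V :=
  {v | ∃ e ∈ M, v ∈ e}

lemma mem_coveredVerts [Fintype V] {M : Finset (Sym2 V)} {v : V} :
    v ∈ coveredVerts M ↔ ∃ e ∈ M, v ∈ e := by
  simp [coveredVerts]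

lemma disjoint_coveredVerts_iff [Fintype V] {M₁ M₂ : Finset (Sym2 V)} :
    Disjoint (coveredVerts M₁) (coveredVerts M₂) ↔ ∀ e ∈ M₁, ∀ f ∈ M₂, ∀ v ∈ e, v ∉ f := by
  simp only [disjoint_left, mem_coveredVerts]
  grind

lemma IsEdgeMatching.union [Fintype V] [DecidableEq V] {M₁ M₂ : Finset (Sym2 V)}
    (h₁ : IsEdgeMatching M₁) (h₂ : IsEdgeMatching M₂)
    (h : Disjoint (coveredVerts M₁) (coveredVerts M₂)) : IsEdgeMatching (M₁ ∪ M₂) := by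
  rw [disjoint_coveredVerts_iff] at h
  rw [IsEdgeMatching, coe_union, Set.pairwise_union]
  exact ⟨h₁, h₂, fun e he f hf _ => ⟨h e he f hf, fun v hvf hve => h e he f hf v hve hvf⟩⟩

lemma IsEdgeMatching.subset {M N : Finset (Sym2 V)} (h : IsEdgeMatching M)
    (hNM : N ⊆ M) : IsEdgeMatching N :=
  Set.Pairwise.mono (coe_subset.2 hNM) h

lemma IsEdgeMatching.disjoint_coveredVerts [Fintype V] {M M₁ M₂ : Finset (Sym2 V)}
    (h : IsEdgeMatching M) (h₁ : M₁ ⊆ M) (h₂ : M₂ ⊆ M) (hdisj : Disjoint M₁ M₂) :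
    Disjoint (coveredVerts M₁) (coveredVerts M₂) :=
  disjoint_coveredVerts_iff.2 fun _ he _ hf =>
    h (h₁ he) (h₂ hf) fun hef => disjoint_left.1 hdisj he (hef ▸ hf)

lemma mCount_sup [Fintype V] [DecidableEq V] {G₁ G₂ : SimpleGraph V} (h : Disjoint G₁ G₂) :
    mCount (G₁ ⊔ G₂) = ∑ M₁ ∈ graphMatchings G₁,
      #{M₂ ∈ graphMatchings G₂ | Disjoint (coveredVerts M₁) (coveredVerts M₂)} := by
  rw [mCount, ← card_sigma]
  refine card_nbij' (fun M => ⟨{e ∈ M | e ∈ G₁.edgeSet}, {e ∈ M | e ∉ G₁.edgeSet}⟩)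
    (fun P => P.1 ∪ P.2) ?_ ?_ ?_ ?_
  · intro M hM
    simp only [coe_sigma, Set.mem_sigma_iff, mem_coe, mem_filter, mem_graphMatchings] at hM ⊢
    obtain ⟨hsub, hM⟩ := hM
    rw [SimpleGraph.edgeSet_sup] at hsub
    refine ⟨⟨fun e he => (mem_filter.1 he).2, hM.subset (filter_subset _ _)⟩,
      ⟨fun e he => ?_, hM.subset (filter_subset _ _)⟩,
      hM.disjoint_coveredVerts (filter_subset _ _) (filter_subset _ _)
        (disjoint_filter_filter_not _ _ _)⟩
    obtain ⟨heM, he₁⟩ := mem_filter.1 he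
    exact (hsub heM).resolve_left he₁
  · rintro ⟨M₁, M₂⟩ hP
    simp only [coe_sigma, Set.mem_sigma_iff, mem_coe, mem_filter, mem_graphMatchings] at hP ⊢
    obtain ⟨⟨hsub₁, hM₁⟩, ⟨hsub₂, hM₂⟩, hdisj⟩ := hP
    refine ⟨?_, hM₁.union hM₂ hdisj⟩
    rw [coe_union, SimpleGraph.edgeSet_sup]
    exact Set.union_subset_union hsub₁ hsub₂
  · intro M _
    exact filter_union_filter_not_eq _ M
  · rintro ⟨M₁, M₂⟩ hP
    simp only [coe_sigma, Set.mem_sigma_iff, mem_coe, mem_filter, mem_graphMatchings] at hP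
    have h₁ : ∀ e ∈ M₁, e ∈ G₁.edgeSet := fun e he => hP.1.1 he
    have h₂ : ∀ e ∈ M₂, e ∉ G₁.edgeSet := fun e he he₁ =>
      Set.disjoint_left.1 (SimpleGraph.disjoint_edgeSet.2 h) he₁ (hP.2.1.1 he)
    simp only [filter_union, filter_true_of_mem h₁, filter_false_of_mem h₂,
      filter_false_of_mem fun e he => not_not.2 (h₁ e he), filter_true_of_mem h₂,
      union_empty, empty_union]

lemma filter_disjoint_coveredVerts_graphMatchings_completeOn [Fintype V]
    [DecidableEq V] (S U : Finset V) :
    {M ∈ graphMatchings (completeOn S) | Disjoint U (coveredVerts M)} =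
      graphMatchings (completeOn (S \ U)) := by
  ext M
  simp only [mem_filter, mem_graphMatchings, Set.subset_def, mem_coe, mem_edgeSet_completeOn,
    disjoint_right, mem_coveredVerts, mem_sdiff]
  grind

/-- Double counting the incidences between `coveredVerts M ∩ K` and `M`: each covered vertex
lies on exactly one edge of the matching, and each edge has exactly one endpoint in `K`. -/
lemma card_coveredVerts_inter [Fintype V] [DecidableEq V] {B : SimpleGraph V} {K : Finset V}
    (hB : ∀ x y, B.Adj x y → (x ∈ K ↔ y ∉ K)) {M : Finset (Sym2 V)}
    (hM : M ∈ graphMatchings B) : #(coveredVerts M ∩ K) = #M := by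
  rw [mem_graphMatchings] at hM
  have := card_mul_eq_card_mul (fun v e => v ∈ e) (s := coveredVerts M ∩ K) (t := M)
    (m := 1) (n := 1) ?_ ?_
  · simpa using this
  · intro v hv
    obtain ⟨e, he, hve⟩ := mem_coveredVerts.1 (mem_inter.1 hv).1
    refine card_eq_one.2
      ⟨e, eq_singleton_iff_unique_mem.2 ⟨(mem_bipartiteAbove _).2 ⟨he, hve⟩, ?_⟩⟩
    intro f hf
    obtain ⟨hf, hvf⟩ := (mem_bipartiteAbove _).1 hf
    by_contra hne
    exact hM.2 hf he hne v hvf hve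
  · intro e he
    induction e using Sym2.ind with | _ x y => ?_
    have hxy := hB x y (hM.1 he)
    have hx : x ∈ coveredVerts M := mem_coveredVerts.2 ⟨_, he, Sym2.mem_mk_left x y⟩
    have hy : y ∈ coveredVerts M := mem_coveredVerts.2 ⟨_, he, Sym2.mem_mk_right x y⟩
    refine card_eq_one.2 ⟨if x ∈ K then x else y, ?_⟩
    ext v
    simp only [mem_bipartiteBelow _, mem_inter, Sym2.mem_iff, mem_singleton]
    grind

lemma sum_graphMatchings_eq_sum_mkCount [Fintype V] (B : SimpleGraph V)
    (f : ℕ → ℕ) {n : ℕ} (hn : ∀ M ∈ graphMatchings B, #M ≤ n) :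
    ∑ M ∈ graphMatchings B, f #M = ∑ k ∈ range (n + 1), mkCount B k * f k := by
  rw [← sum_fiberwise_of_maps_to (g := card) (t := range (n + 1))
    fun M hM => mem_range.2 (Nat.lt_succ_of_le (hn M hM))]
  refine sum_congr rfl fun k _ => ?_
  rw [mkCount, sum_congr rfl fun M hM => by rw [(mem_filter.1 hM).2], sum_const, smul_eq_mul]

lemma disjoint_completeOn {B : SimpleGraph V} {K : Finset V}
    (hB : ∀ x y, B.Adj x y → (x ∈ K ↔ y ∉ K)) : Disjoint B (completeOn K) := by
  refine SimpleGraph.disjoint_left.2 fun x y hxy hK => ?_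
  rw [completeOn_adj] at hK
  exact (hB x y hxy).1 hK.1.1 hK.1.2

lemma eq_sup_completeOn {G B : SimpleGraph V} {K I : Finset V}
    (hcover : ∀ v, v ∈ K ∨ v ∈ I) (hK : G.IsClique (K : Set V))
    (hI : ∀ x ∈ I, ∀ y ∈ I, ¬ G.Adj x y)
    (hB : ∀ x y, B.Adj x y ↔ (G.Adj x y ∧ ((x ∈ K ∧ y ∈ I) ∨ (x ∈ I ∧ y ∈ K)))) :
    G = B ⊔ completeOn K := by
  ext x y
  rw [SimpleGraph.sup_adj, hB, completeOn_adj]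
  constructor
  · intro hxy
    rcases hcover x with hx | hx <;> rcases hcover y with hy | hy
    · exact Or.inr ⟨⟨hx, hy⟩, hxy.ne⟩
    · exact Or.inl ⟨hxy, Or.inl ⟨hx, hy⟩⟩
    · exact Or.inl ⟨hxy, Or.inr ⟨hx, hy⟩⟩
    · exact absurd hxy (hI x hx y hy)
  · rintro (⟨hxy, -⟩ | ⟨⟨hx, hy⟩, hne⟩)
    · exact hxy
    · exact hK hx hy hne

end

/-- Let `G` be a graph whose vertex set is partitioned as `V = K ∪ I` where `K` induces a
clique of size `s` and `I` is an independent set, and let `B` be the bipartite graph on the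
same vertex set whose edges are exactly the edges of `G` with one endpoint in `K` and one in
`I`.  Then `m(G) = Σ_{k ≥ 0} m_k(B) · m(K_{s-k})`.  (All terms with `k > s` vanish, since a
`k`-matching of `B` uses `k` distinct vertices of `K`, so the sum over `0 ≤ k ≤ s`
captures the full sum.) -/
theorem matchings_clique_indep_decomposition {V : Type*} [Fintype V] [DecidableEq V]
    (G : SimpleGraph V) (K I : Finset V) (hdisj : Disjoint K I) (hcover : K ∪ I = Finset.univ)
    (hK : G.IsClique (K : Set V)) (hI : ∀ x ∈ I, ∀ y ∈ I, ¬ G.Adj x y)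
    (s : ℕ) (hs : K.card = s)
    (B : SimpleGraph V)
    (hB : ∀ x y, B.Adj x y ↔ (G.Adj x y ∧ ((x ∈ K ∧ y ∈ I) ∨ (x ∈ I ∧ y ∈ K)))) :
    mCount G = ∑ k ∈ Finset.range (s + 1),
      mkCount B k * mCount (⊤ : SimpleGraph (Fin (s - k))) := by
  have hbip : ∀ x y, B.Adj x y → (x ∈ K ↔ y ∉ K) := fun x y hxy => by
    rcases ((hB x y).1 hxy).2 with ⟨hx, hy⟩ | ⟨hx, hy⟩
    · exact iff_of_true hx (disjoint_right.1 hdisj hy)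
    · exact iff_of_false (disjoint_right.1 hdisj hx) (not_not.2 hy)
  have hcard : ∀ M ∈ graphMatchings B, #(K \ coveredVerts M) = s - #M := fun M hM => by
    rw [card_sdiff, card_coveredVerts_inter hbip hM, hs]
  have hle : ∀ M ∈ graphMatchings B, #M ≤ s := fun M hM =>
    hs ▸ card_coveredVerts_inter hbip hM ▸ card_le_card inter_subset_right
  rw [eq_sup_completeOn (fun v => mem_union.1 (hcover ▸ mem_univ v)) hK hI hB,
    mCount_sup (disjoint_completeOn hbip),
    ← sum_graphMatchings_eq_sum_mkCount B (fun k => mCount (⊤ : SimpleGraph (Fin (s - k)))) hle]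
  refine sum_congr rfl fun M hM => ?_
  rw [filter_disjoint_coveredVerts_graphMatchings_completeOn, ← mCount, mCount_completeOn,
    hcard M hM]
end

section
/- Let G be a bipartite graph with bipartition (X, Y) and let u, v ∈ X. Then for every k ≥ 0, the compressed graph G_{u→v} satisfies m_k(G_{u→v}) ≤ m_k(G). -/
open Classical

/-- `N_G(x, ȳ)`: the set of vertices other than `x` and `y` adjacent to `x`
but not to `y`. -/
def sideNbhd {V : Type*} (G : SimpleGraph V) (x y : V) : Set V :=
  {v | v ≠ x ∧ v ≠ y ∧ G.Adj x v ∧ ¬ G.Adj y v}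

/-- The compression `G_{x→y}` of `G` from `x` to `y`: delete all edges between `x`
and `N_G(x, ȳ)` and add all edges between `y` and `N_G(x, ȳ)`. -/
def compress {V : Type*} (G : SimpleGraph V) (x y : V) : SimpleGraph V :=
  SimpleGraph.fromEdgeSet
    ((G.edgeSet \ {e | ∃ v ∈ sideNbhd G x y, e = s(x, v)}) ∪
      {e | ∃ v ∈ sideNbhd G x y, e = s(y, v)})

/-- `d₂(G) = Σ_v deg(v)²`. -/
noncomputable def d2 {V : Type*} [Fintype V] (G : SimpleGraph V) : ℕ :=
  ∑ v : V, (G.neighborSet v).ncard ^ 2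

/-- The closed neighborhood `N_G[x]`. -/
def closedNbhd {V : Type*} (G : SimpleGraph V) (x : V) : Set V :=
  insert x (G.neighborSet x)

/-!
A matching of `G_{u→v}` that avoids the new edges `v w` (`w ∈ N_G(u, v̄)`) is already a matching
of `G`. A matching that uses such an edge has `v` covered by it, so any edge `u z` it contains
has `z ∉ N_G(u, v̄)`, i.e. `v z` is an edge of `G`; hence swapping `u` and `v` turns it into a
matching of `G` of the same size. The two cases are told apart by whether the image contains an
edge `u w` with `w ∈ N_G(u, v̄)`, and such edges do not exist in `G_{u→v}`, so the resulting map
is injective.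
-/

section

variable {V : Type*}

def IsVertexDisjoint (M : Finset (Sym2 V)) : Prop :=
  ∀ e ∈ M, ∀ f ∈ M, e ≠ f → ∀ v : V, v ∈ e → v ∉ f

lemma mem_graphMatchings_iff [Fintype V] {G : SimpleGraph V} {M : Finset (Sym2 V)} :
    M ∈ graphMatchings G ↔ (∀ e ∈ M, e ∈ G.edgeSet) ∧ IsVertexDisjoint M := by
  simp [graphMatchings, IsVertexDisjoint, Finset.subset_iff]

lemma IsVertexDisjoint.eq_of_mem {M : Finset (Sym2 V)} (hM : IsVertexDisjoint M)
    {e f : Sym2 V} (he : e ∈ M) (hf : f ∈ M) {v : V} (hve : v ∈ e) (hvf : v ∈ f) : e = f := by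
  by_contra hne
  exact hM e he f hf hne v hve hvf

lemma IsVertexDisjoint.image_map {M : Finset (Sym2 V)} (hM : IsVertexDisjoint M) {f : V → V}
    (hf : Function.Injective f) : IsVertexDisjoint (M.image (Sym2.map f)) := by
  simp only [IsVertexDisjoint, Finset.mem_image]
  rintro _ ⟨e, he, rfl⟩ _ ⟨e', he', rfl⟩ hne _ hv hv'
  obtain ⟨a, ha, rfl⟩ := Sym2.mem_map.mp hv
  obtain ⟨b, hb, hab⟩ := Sym2.mem_map.mp hv'
  rw [hf hab] at hb
  exact hM e he e' he' (fun h => hne (h ▸ rfl)) a ha hb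

section Compression

variable {G : SimpleGraph V} {x y : V}

lemma mem_compress_edgeSet {e : Sym2 V} :
    e ∈ (compress G x y).edgeSet ↔
      (e ∈ G.edgeSet ∧ ∀ w ∈ sideNbhd G x y, e ≠ s(x, w)) ∨ ∃ w ∈ sideNbhd G x y, e = s(y, w) := by
  rw [compress, SimpleGraph.edgeSet_fromEdgeSet, Set.mem_sdiff, and_iff_left_of_imp]
  · simp only [Set.mem_union, Set.mem_sdiff, Set.mem_ofPred_eq, not_exists, not_and]
  · rintro (⟨he, -⟩ | ⟨w, hw, rfl⟩)
    · exact G.not_isDiag_of_mem_edgeSet he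
    · exact fun h => hw.2.1 (Sym2.mk_isDiag_iff.mp h).symm

lemma mk_notMem_compress_edgeSet {w : V} (hw : w ∈ sideNbhd G x y) :
    s(x, w) ∉ (compress G x y).edgeSet := by
  rw [mem_compress_edgeSet]
  rintro (⟨-, hne⟩ | ⟨w', hw', heq⟩)
  · exact hne w hw rfl
  · rcases Sym2.eq_iff.mp heq with ⟨rfl, rfl⟩ | ⟨rfl, -⟩
    · exact hw'.2.2.2 hw'.2.2.1
    · exact hw'.1 rfl

lemma map_swap_mk_of_mem_sideNbhd {w : V} (hw : w ∈ sideNbhd G x y) :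
    Sym2.map (Equiv.swap x y) s(y, w) = s(x, w) := by
  rw [Sym2.map_mk, Equiv.swap_apply_right, Equiv.swap_apply_of_ne_of_ne hw.1 hw.2.1]

lemma map_swap_mem_edgeSet_of_notMem {e : Sym2 V} (he : e ∈ (compress G x y).edgeSet)
    (hy : y ∉ e) : Sym2.map (Equiv.swap x y) e ∈ G.edgeSet := by
  rcases mem_compress_edgeSet.mp he with ⟨heG, hold⟩ | ⟨w, -, rfl⟩
  · by_cases hx : x ∈ e
    · obtain ⟨z, rfl⟩ := Sym2.mem_iff_exists.mp hx
      have hxz : G.Adj x z := heG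
      have hzy : z ≠ y := by
        rintro rfl
        exact hy (Sym2.mem_mk_right x z)
      -- `x z` survived the compression, so `z ∉ N_G(x, ȳ)`
      have hyz : G.Adj y z := by
        by_contra h
        exact hold z ⟨hxz.ne', hzy, hxz, h⟩ rfl
      rwa [Sym2.map_mk, Equiv.swap_apply_left, Equiv.swap_apply_of_ne_of_ne hxz.ne' hzy]
    · rwa [Sym2.map_congr (f := Equiv.swap x y) (g := id) fun a ha => Equiv.swap_apply_of_ne_of_ne
        (ne_of_mem_of_not_mem ha hx) (ne_of_mem_of_not_mem ha hy), Sym2.map_id, id]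
  · exact absurd (Sym2.mem_mk_left y w) hy

noncomputable def decompress (G : SimpleGraph V) (x y : V) (M : Finset (Sym2 V)) :
    Finset (Sym2 V) :=
  if ∃ w ∈ sideNbhd G x y, s(y, w) ∈ M then M.image (Sym2.map (Equiv.swap x y)) else M

lemma card_decompress (M : Finset (Sym2 V)) : (decompress G x y M).card = M.card := by
  unfold decompress
  split_ifs
  · exact Finset.card_image_of_injective M (Sym2.map.injective (Equiv.swap x y).injective)
  · rfl

lemma decompress_mem_graphMatchings [Fintype V] {M : Finset (Sym2 V)}
    (hM : M ∈ graphMatchings (compress G x y)) : decompress G x y M ∈ graphMatchings G := by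
  obtain ⟨hedges, hdisj⟩ := mem_graphMatchings_iff.mp hM
  unfold decompress
  split_ifs with hnew
  · obtain ⟨w₀, hw₀, hw₀M⟩ := hnew
    refine mem_graphMatchings_iff.mpr ⟨?_, hdisj.image_map (Equiv.swap x y).injective⟩
    simp only [Finset.mem_image]
    rintro _ ⟨e, he, rfl⟩
    by_cases hy : y ∈ e
    · rw [hdisj.eq_of_mem he hw₀M hy (Sym2.mem_mk_left y w₀), map_swap_mk_of_mem_sideNbhd hw₀]
      exact hw₀.2.2.1
    · exact map_swap_mem_edgeSet_of_notMem (hedges e he) hy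
  · refine mem_graphMatchings_iff.mpr ⟨fun e he => ?_, hdisj⟩
    rcases mem_compress_edgeSet.mp (hedges e he) with ⟨heG, -⟩ | ⟨w, hw, rfl⟩
    · exact heG
    · exact absurd ⟨w, hw, he⟩ hnew

lemma exists_mk_mem_decompress_iff {M : Finset (Sym2 V)}
    (hM : ∀ e ∈ M, e ∈ (compress G x y).edgeSet) :
    (∃ w ∈ sideNbhd G x y, s(x, w) ∈ decompress G x y M) ↔
      ∃ w ∈ sideNbhd G x y, s(y, w) ∈ M := by
  unfold decompress
  split_ifs with hnew
  · refine iff_of_true ?_ hnew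
    obtain ⟨w, hw, hwM⟩ := hnew
    exact ⟨w, hw, map_swap_mk_of_mem_sideNbhd hw ▸ Finset.mem_image_of_mem _ hwM⟩
  · exact iff_of_false (fun ⟨w, hw, hwM⟩ => mk_notMem_compress_edgeSet hw (hM _ hwM)) hnew

lemma decompress_injOn [Fintype V] :
    Set.InjOn (decompress G x y) (graphMatchings (compress G x y)) := by
  intro M₁ h₁ M₂ h₂ heq
  have hnew := exists_mk_mem_decompress_iff (mem_graphMatchings_iff.mp h₁).1
  rw [heq, exists_mk_mem_decompress_iff (mem_graphMatchings_iff.mp h₂).1] at hnew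
  unfold decompress at heq
  by_cases h : ∃ w ∈ sideNbhd G x y, s(y, w) ∈ M₁
  · rw [if_pos h, if_pos (hnew.mpr h)] at heq
    exact Finset.image_injective (Sym2.map.injective (Equiv.swap x y).injective) heq
  · rwa [if_neg h, if_neg (mt hnew.mp h)] at heq

end Compression

end

theorem mk_compress_le_bipartite_general {V : Type*} [Fintype V] (G : SimpleGraph V)
    (u v : V) (k : ℕ) :
    mkCount (compress G u v) k ≤ mkCount G k := by
  refine Finset.card_le_card_of_injOn (decompress G u v) (fun M hM => ?_)
    (decompress_injOn.mono fun M hM => (Finset.mem_filter.mp hM).1)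
  rw [Finset.mem_coe, Finset.mem_filter] at hM ⊢
  exact ⟨decompress_mem_graphMatchings hM.1, (card_decompress M).trans hM.2⟩

/-- Let `G` be a bipartite graph with bipartition `(X, Y)` and let `u, v ∈ X`.  Then for
every `k ≥ 0`, the compression `G_{u→v}` satisfies `m_k(G_{u→v}) ≤ m_k(G)`. -/
theorem mk_compress_le_bipartite {V : Type*} [Fintype V] (G : SimpleGraph V) (X Y : Set V)
    (hdisj : Disjoint X Y) (hcover : X ∪ Y = Set.univ)
    (hbip : ∀ a b, G.Adj a b → (a ∈ X ∧ b ∈ Y) ∨ (a ∈ Y ∧ b ∈ X))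
    (u v : V) (hu : u ∈ X) (hv : v ∈ X) (k : ℕ) :
    mkCount (compress G u v) k ≤ mkCount G k :=
  mk_compress_le_bipartite_general G u v k
end

section
/- Let G be a bipartite graph with bipartition (X, Y) and let u, v ∈ X. Then the compressed graph G_{u→v} has the same number of edges as G, and d_2(G_{u→v}) ≥ d_2(G). Moreover, if N_G(u) ⊄ N_G(v) and N_G(v) ⊄ N_G(u), then d_2(G_{u→v}) > d_2(G). -/
open Classical

/-! For non-adjacent `u ≠ v` (in a bipartite graph, any two vertices of one side), the
compression `G_{u→v}` gives `u` the neighbourhood `N(u) ∩ N(v)` and `v` the neighbourhood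
`N(u) ∪ N(v)`, while a vertex of `N(u, v̄)` merely trades its neighbour `u` for `v`; all other
degrees stay put. So the degrees `a, b` of `u, v` become `i, a + b - i` with `i ≤ a, b`:
the degree sum, hence the number of edges, is unchanged, and
`i² + (a + b - i)² - a² - b² = 2 (a - i) (b - i) ≥ 0`, with strict inequality when `N(u)` and
`N(v)` are incomparable. -/

namespace SimpleGraph

variable {V : Type*} {G : SimpleGraph V} {u v a b : V}

lemma compress_adj :
    (compress G u v).Adj a b ↔ a ≠ b ∧
      ((G.Adj a b ∧ ¬ (a = u ∧ b ∈ sideNbhd G u v ∨ b = u ∧ a ∈ sideNbhd G u v)) ∨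
        (a = v ∧ b ∈ sideNbhd G u v ∨ b = v ∧ a ∈ sideNbhd G u v)) := by
  simp only [compress, fromEdgeSet_adj, Set.mem_union, Set.mem_sdiff, Set.mem_ofPred_eq,
    mem_edgeSet, Sym2.eq_iff]
  grind

lemma neighborSet_compress_left (hnadj : ¬ G.Adj u v) :
    (compress G u v).neighborSet u = G.neighborSet u ∩ G.neighborSet v := by
  ext w
  simp only [mem_neighborSet, compress_adj, Set.mem_inter_iff, sideNbhd, Set.mem_ofPred_eq]
  grind [SimpleGraph.irrefl, G.adj_comm]

lemma neighborSet_compress_right (hnadj : ¬ G.Adj u v) :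
    (compress G u v).neighborSet v = G.neighborSet u ∪ G.neighborSet v := by
  ext w
  simp only [mem_neighborSet, compress_adj, Set.mem_union, sideNbhd, Set.mem_ofPred_eq]
  grind [SimpleGraph.irrefl, G.adj_comm]

lemma neighborSet_compress_of_mem_sideNbhd (ha : a ∈ sideNbhd G u v) :
    (compress G u v).neighborSet a = insert v (G.neighborSet a \ {u}) := by
  ext w
  simp only [sideNbhd, Set.mem_ofPred_eq] at ha
  simp only [mem_neighborSet, compress_adj, Set.mem_insert_iff, Set.mem_sdiff,
    Set.mem_singleton_iff, sideNbhd, Set.mem_ofPred_eq]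
  grind [SimpleGraph.irrefl, G.adj_comm]

lemma neighborSet_compress_of_notMem (hau : a ≠ u) (hav : a ≠ v) (ha : a ∉ sideNbhd G u v) :
    (compress G u v).neighborSet a = G.neighborSet a := by
  ext w
  simp only [mem_neighborSet, compress_adj]
  grind [SimpleGraph.irrefl, G.adj_comm]

lemma compress_self (G : SimpleGraph V) (u : V) : compress G u u = G := by
  ext a b
  simp only [compress_adj, sideNbhd, Set.mem_ofPred_eq]
  grind [SimpleGraph.irrefl]

lemma ncard_neighborSet_compress_of_ne [Finite V] (hau : a ≠ u) (hav : a ≠ v) :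
    ((compress G u v).neighborSet a).ncard = (G.neighborSet a).ncard := by
  by_cases ha : a ∈ sideNbhd G u v
  · have hu : u ∈ G.neighborSet a := ha.2.2.1.symm
    have hv : v ∉ G.neighborSet a \ {u} := fun h => ha.2.2.2 h.1.symm
    rw [neighborSet_compress_of_mem_sideNbhd ha, Set.ncard_insert_of_notMem hv,
      Set.ncard_sdiff_singleton_add_one hu]
  · rw [neighborSet_compress_of_notMem hau hav ha]

lemma two_mul_ncard_edgeSet [Fintype V] (H : SimpleGraph V) :
    2 * H.edgeSet.ncard = ∑ x, (H.neighborSet x).ncard := by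
  simp only [← Nat.card_coe_set_eq, Nat.card_eq_fintype_card, card_neighborSet_eq_degree,
    sum_degrees_eq_twice_card_edges, edgeFinset, Set.toFinset_card]

end SimpleGraph

lemma Fintype.sum_add_eq_of_eq_off_pair {ι M : Type*} [Fintype ι] [AddCommMonoid M]
    {f g : ι → M} {i j : ι} (hij : i ≠ j) (h : ∀ k, k ≠ i → k ≠ j → f k = g k) :
    ∑ k, f k + (g i + g j) = ∑ k, g k + (f i + f j) := by
  have split (φ : ι → M) : ∑ k, φ k = ∑ k ∈ {i, j}ᶜ, φ k + (φ i + φ j) := by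
    rw [← Finset.sum_pair hij, add_comm, Finset.sum_add_sum_compl]
  have hcompl : ∑ k ∈ {i, j}ᶜ, f k = ∑ k ∈ {i, j}ᶜ, g k :=
    Finset.sum_congr rfl fun k hk => by simp only [Finset.mem_compl, Finset.mem_insert,
      Finset.mem_singleton, not_or] at hk; exact h k hk.1 hk.2
  rw [split f, split g, hcompl]
  abel

lemma Nat.sq_add_sq_le_sq_add_sq {a b i s : ℕ} (h : i + s = a + b) (ha : i ≤ a) (hb : i ≤ b) :
    a ^ 2 + b ^ 2 ≤ i ^ 2 + s ^ 2 := by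
  nlinarith

lemma Nat.sq_add_sq_lt_sq_add_sq {a b i s : ℕ} (h : i + s = a + b) (ha : i < a) (hb : i < b) :
    a ^ 2 + b ^ 2 < i ^ 2 + s ^ 2 := by
  nlinarith

namespace SimpleGraph

variable {V : Type*} [Fintype V] {G : SimpleGraph V} {u v : V}

lemma sum_comp_ncard_neighborSet_compress_add (hne : u ≠ v) (hnadj : ¬ G.Adj u v)
    {M : Type*} [AddCommMonoid M] (φ : ℕ → M) :
    ∑ x, φ ((compress G u v).neighborSet x).ncard +
        (φ (G.neighborSet u).ncard + φ (G.neighborSet v).ncard) =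
      ∑ x, φ (G.neighborSet x).ncard +
        (φ (G.neighborSet u ∩ G.neighborSet v).ncard +
          φ (G.neighborSet u ∪ G.neighborSet v).ncard) := by
  have key := Fintype.sum_add_eq_of_eq_off_pair
    (f := fun x => φ ((compress G u v).neighborSet x).ncard)
    (g := fun x => φ (G.neighborSet x).ncard) hne fun x hxu hxv => by
      rw [ncard_neighborSet_compress_of_ne hxu hxv]
  rwa [neighborSet_compress_left hnadj, neighborSet_compress_right hnadj] at key

lemma ncard_edgeSet_compress (hne : u ≠ v) (hnadj : ¬ G.Adj u v) :
    (compress G u v).edgeSet.ncard = G.edgeSet.ncard := by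
  have hsum := sum_comp_ncard_neighborSet_compress_add hne hnadj id
  have hunion := Set.ncard_inter_add_ncard_union (G.neighborSet u) (G.neighborSet v)
  have h' := two_mul_ncard_edgeSet (compress G u v)
  have h := two_mul_ncard_edgeSet G
  simp only [id] at hsum
  omega

lemma d2_le_d2_compress (hne : u ≠ v) (hnadj : ¬ G.Adj u v) :
    d2 G ≤ d2 (compress G u v) := by
  have hsum := sum_comp_ncard_neighborSet_compress_add hne hnadj (· ^ 2)
  have hsq := Nat.sq_add_sq_le_sq_add_sq
    (Set.ncard_inter_add_ncard_union (G.neighborSet u) (G.neighborSet v))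
    (Set.ncard_le_ncard Set.inter_subset_left) (Set.ncard_le_ncard Set.inter_subset_right)
  unfold d2
  omega

lemma d2_lt_d2_compress (hne : u ≠ v) (hnadj : ¬ G.Adj u v)
    (huv : ¬ G.neighborSet u ⊆ G.neighborSet v) (hvu : ¬ G.neighborSet v ⊆ G.neighborSet u) :
    d2 G < d2 (compress G u v) := by
  have hsum := sum_comp_ncard_neighborSet_compress_add hne hnadj (· ^ 2)
  have hsq := Nat.sq_add_sq_lt_sq_add_sq
    (Set.ncard_inter_add_ncard_union (G.neighborSet u) (G.neighborSet v))
    (Set.ncard_lt_ncard (Set.inter_ssubset_left_iff.2 huv))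
    (Set.ncard_lt_ncard (Set.inter_ssubset_right_iff.2 hvu))
  unfold d2
  omega

end SimpleGraph

theorem compress_edges_d2_bipartite_general {V : Type*} [Fintype V] (G : SimpleGraph V) (X Y : Set V)
    (hdisj : Disjoint X Y)
    (hbip : ∀ a b, G.Adj a b → (a ∈ X ∧ b ∈ Y) ∨ (a ∈ Y ∧ b ∈ X))
    (u v : V) (hu : u ∈ X) (hv : v ∈ X) :
    (compress G u v).edgeSet.ncard = G.edgeSet.ncard ∧
    d2 G ≤ d2 (compress G u v) ∧
    (¬ G.neighborSet u ⊆ G.neighborSet v → ¬ G.neighborSet v ⊆ G.neighborSet u →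
      d2 G < d2 (compress G u v)) := by
  obtain rfl | hne := eq_or_ne u v
  · rw [SimpleGraph.compress_self]
    exact ⟨rfl, le_rfl, fun h => absurd subset_rfl h⟩
  have hnadj : ¬ G.Adj u v := fun h => (hbip u v h).elim
    (fun h => Set.disjoint_left.1 hdisj hv h.2) (fun h => Set.disjoint_left.1 hdisj hu h.1)
  exact ⟨SimpleGraph.ncard_edgeSet_compress hne hnadj, SimpleGraph.d2_le_d2_compress hne hnadj,
    SimpleGraph.d2_lt_d2_compress hne hnadj⟩

/-- Let `G` be a bipartite graph with bipartition `(X, Y)` and `u, v ∈ X`.  Then the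
compression `G_{u→v}` has the same number of edges as `G` and `d₂(G_{u→v}) ≥ d₂(G)`;
moreover if the open neighborhoods `N_G(u)` and `N_G(v)` are incomparable then
`d₂(G_{u→v}) > d₂(G)`. -/
theorem compress_edges_d2_bipartite {V : Type*} [Fintype V] (G : SimpleGraph V) (X Y : Set V)
    (hdisj : Disjoint X Y) (hcover : X ∪ Y = Set.univ)
    (hbip : ∀ a b, G.Adj a b → (a ∈ X ∧ b ∈ Y) ∨ (a ∈ Y ∧ b ∈ X))
    (u v : V) (hu : u ∈ X) (hv : v ∈ X) :
    (compress G u v).edgeSet.ncard = G.edgeSet.ncard ∧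
    d2 G ≤ d2 (compress G u v) ∧
    (¬ G.neighborSet u ⊆ G.neighborSet v → ¬ G.neighborSet v ⊆ G.neighborSet u →
      d2 G < d2 (compress G u v)) :=
  compress_edges_d2_bipartite_general G X Y hdisj hbip u v hu hv
end

section
/- Let 𝒢 be a family of bipartite graphs on a fixed finite vertex set with a fixed bipartition (X, Y) such that for every G′ ∈ 𝒢 and all u, v ∈ X, the compression G′_{u→v} also belongs to 𝒢. If G ∈ 𝒢 satisfies d_2(G) = max{ d_2(G′) : G′ ∈ 𝒢 }, then the open neighborhoods { N_G(u) : u ∈ X } are linearly ordered by inclusion; that is, G is threshold bipartite. -/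
/-!
The compression `G_{u→v}` moves the `s = |N(u) \ N(v)|` private neighbours of `u` over to `v`
and leaves every other degree unchanged, so `d₂` grows by `2s(d(v) - |N(u) ∩ N(v)|)`. If the
neighbourhoods of two (nonadjacent) vertices `u, v ∈ X` were incomparable, both factors would
be positive, and `G` would not maximise `d₂`.
-/

open Classical

section Compression

variable {V : Type*} {G : SimpleGraph V} {u v x : V}

lemma compress_adj {a b : V} :
    (compress G u v).Adj a b ↔
      G.Adj a b ∧ ¬(a = u ∧ b ∈ sideNbhd G u v ∨ b = u ∧ a ∈ sideNbhd G u v) ∨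
        a = v ∧ b ∈ sideNbhd G u v ∨ b = v ∧ a ∈ sideNbhd G u v := by
  simp only [compress, SimpleGraph.fromEdgeSet_adj, Set.mem_union, Set.mem_sdiff,
    SimpleGraph.mem_edgeSet, Set.mem_ofPred_eq, Sym2.eq_iff]
  constructor
  · rintro ⟨h, -⟩
    rcases h with ⟨hab, hS⟩ | ⟨w, hw, h⟩
    · exact Or.inl ⟨hab, by
        rintro (⟨rfl, hb⟩ | ⟨rfl, ha⟩)
        · exact hS ⟨b, hb, .inl ⟨rfl, rfl⟩⟩
        · exact hS ⟨a, ha, .inr ⟨rfl, rfl⟩⟩⟩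
    · aesop
  · intro h
    refine ⟨by aesop, ?_⟩
    rintro rfl
    simp only [sideNbhd, Set.mem_ofPred_eq] at h
    aesop

lemma neighborSet_compress_left :
    (compress G u v).neighborSet u = G.neighborSet u \ sideNbhd G u v := by
  ext w
  simp only [SimpleGraph.mem_neighborSet, compress_adj, Set.mem_sdiff, sideNbhd,
    Set.mem_ofPred_eq]
  aesop

lemma neighborSet_compress_right :
    (compress G u v).neighborSet v = G.neighborSet v ∪ sideNbhd G u v := by
  ext w
  simp only [SimpleGraph.mem_neighborSet, compress_adj, Set.mem_union, sideNbhd,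
    Set.mem_ofPred_eq]
  aesop

lemma neighborSet_compress_of_mem_sideNbhd (hx : x ∈ sideNbhd G u v) :
    (compress G u v).neighborSet x = insert v (G.neighborSet x \ {u}) := by
  ext w
  simp only [sideNbhd, Set.mem_ofPred_eq] at hx
  simp only [SimpleGraph.mem_neighborSet, compress_adj, Set.mem_insert_iff, Set.mem_sdiff,
    Set.mem_singleton_iff, sideNbhd, Set.mem_ofPred_eq]
  aesop

lemma neighborSet_compress_of_notMem_sideNbhd (hxu : x ≠ u) (hxv : x ≠ v)
    (hx : x ∉ sideNbhd G u v) :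
    (compress G u v).neighborSet x = G.neighborSet x := by
  ext w
  simp only [SimpleGraph.mem_neighborSet, compress_adj]
  aesop

lemma sideNbhd_subset_neighborSet : sideNbhd G u v ⊆ G.neighborSet u := fun _ h ↦ h.2.2.1

lemma disjoint_sideNbhd_neighborSet : Disjoint (sideNbhd G u v) (G.neighborSet v) :=
  Set.disjoint_left.2 fun _ h ↦ h.2.2.2

lemma sideNbhd_eq_sdiff (h : ¬G.Adj u v) :
    sideNbhd G u v = G.neighborSet u \ G.neighborSet v := by
  ext w
  simp only [sideNbhd, Set.mem_ofPred_eq, Set.mem_sdiff, SimpleGraph.mem_neighborSet]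
  exact ⟨fun hw ↦ hw.2.2, fun hw ↦ ⟨(G.ne_of_adj hw.1).symm, fun hwv ↦ h (hwv ▸ hw.1), hw⟩⟩

lemma ncard_neighborSet_compress_of_ne [Finite V] (hxu : x ≠ u) (hxv : x ≠ v) :
    ((compress G u v).neighborSet x).ncard = (G.neighborSet x).ncard := by
  by_cases hx : x ∈ sideNbhd G u v
  · have hvx : v ∉ G.neighborSet x \ {u} := fun h ↦ hx.2.2.2 (G.adj_symm h.1)
    rw [neighborSet_compress_of_mem_sideNbhd hx, Set.ncard_insert_of_notMem hvx,
      Set.ncard_sdiff_singleton_add_one (G.mem_neighborSet x u |>.2 (G.adj_symm hx.2.2.1))]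
  · rw [neighborSet_compress_of_notMem_sideNbhd hxu hxv hx]

lemma d2_add_eq_of_ncard_neighborSet_eq [Fintype V] {H : SimpleGraph V} (huv : u ≠ v)
    (h : ∀ x, x ≠ u → x ≠ v → (H.neighborSet x).ncard = (G.neighborSet x).ncard) :
    d2 H + ((G.neighborSet u).ncard ^ 2 + (G.neighborSet v).ncard ^ 2) =
      d2 G + ((H.neighborSet u).ncard ^ 2 + (H.neighborSet v).ncard ^ 2) := by
  have split : ∀ K : SimpleGraph V, d2 K = (K.neighborSet u).ncard ^ 2 +
      ((K.neighborSet v).ncard ^ 2 +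
        ∑ x ∈ (Finset.univ.erase u).erase v, (K.neighborSet x).ncard ^ 2) := fun K ↦ by
    rw [d2, ← Finset.add_sum_erase _ _ (Finset.mem_univ u),
      ← Finset.add_sum_erase _ _ (Finset.mem_erase.2 ⟨huv.symm, Finset.mem_univ v⟩)]
  have rest : ∑ x ∈ (Finset.univ.erase u).erase v, (H.neighborSet x).ncard ^ 2 =
      ∑ x ∈ (Finset.univ.erase u).erase v, (G.neighborSet x).ncard ^ 2 :=
    Finset.sum_congr rfl fun x hx ↦ by
      rw [h x (Finset.ne_of_mem_erase (Finset.mem_of_mem_erase hx))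
        (Finset.ne_of_mem_erase hx)]
  rw [split G, split H, rest]
  ring

lemma d2_compress_add [Fintype V] (huv : u ≠ v) :
    d2 (compress G u v) + 2 * (sideNbhd G u v).ncard *
        (G.neighborSet u \ sideNbhd G u v).ncard =
      d2 G + 2 * (sideNbhd G u v).ncard * (G.neighborSet v).ncard := by
  have key := d2_add_eq_of_ncard_neighborSet_eq (G := G) huv fun x hxu hxv ↦
    ncard_neighborSet_compress_of_ne hxu hxv
  rw [neighborSet_compress_left, neighborSet_compress_right,
    Set.ncard_union_eq disjoint_sideNbhd_neighborSet.symm,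
    ← Set.ncard_sdiff_add_ncard_of_subset sideNbhd_subset_neighborSet] at key
  nlinarith

lemma d2_lt_d2_compress [Fintype V] (huv : u ≠ v) (hS : (sideNbhd G u v).Nonempty)
    (hlt : (G.neighborSet u \ sideNbhd G u v).ncard < (G.neighborSet v).ncard) :
    d2 G < d2 (compress G u v) := by
  have hs : 0 < (sideNbhd G u v).ncard := hS.ncard_pos
  have := d2_compress_add (G := G) huv
  nlinarith

lemma d2_lt_d2_compress_of_not_adj [Fintype V] (hadj : ¬G.Adj u v)
    (hu : ¬G.neighborSet u ⊆ G.neighborSet v) (hv : ¬G.neighborSet v ⊆ G.neighborSet u) :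
    d2 G < d2 (compress G u v) := by
  have huv : u ≠ v := by rintro rfl; exact hu le_rfl
  refine d2_lt_d2_compress huv ?_ ?_
  · rw [sideNbhd_eq_sdiff hadj]
    exact Set.sdiff_nonempty.2 hu
  · rw [sideNbhd_eq_sdiff hadj, Set.sdiff_sdiff_right_self]
    exact Set.ncard_lt_ncard ⟨Set.inter_subset_right, fun h ↦ hv fun w hw ↦ (h hw).1⟩

end Compression

theorem max_d2_is_threshold_bipartite_general {V : Type*} [Fintype V] (X Y : Set V)
    (hdisj : Disjoint X Y)
    (𝒢 : Set (SimpleGraph V))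
    (hbip : ∀ G' ∈ 𝒢, ∀ a b : V, G'.Adj a b → (a ∈ X ∧ b ∈ Y) ∨ (a ∈ Y ∧ b ∈ X))
    (hclosed : ∀ G' ∈ 𝒢, ∀ u ∈ X, ∀ v ∈ X, compress G' u v ∈ 𝒢)
    (G : SimpleGraph V) (hG : G ∈ 𝒢) (hmax : ∀ G' ∈ 𝒢, d2 G' ≤ d2 G) :
    ∀ u ∈ X, ∀ v ∈ X, G.neighborSet u ⊆ G.neighborSet v ∨ G.neighborSet v ⊆ G.neighborSet u := by
  intro u hu v hv
  by_contra! ⟨hnuv, hnvu⟩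
  have hadj : ¬G.Adj u v := fun h ↦ by
    rcases hbip G hG u v h with ⟨-, hvY⟩ | ⟨huY, -⟩
    · exact hdisj.ne_of_mem hv hvY rfl
    · exact hdisj.ne_of_mem hu huY rfl
  exact (hmax _ (hclosed G hG u hu v hv)).not_gt (d2_lt_d2_compress_of_not_adj hadj hnuv hnvu)

/-- Let `𝒢` be a family of bipartite graphs on a fixed finite vertex set with a fixed
bipartition `(X, Y)`, closed under compressions `G'_{u→v}` for `u, v ∈ X`.  If `G ∈ 𝒢`
attains the maximum of `d₂` over `𝒢`, then the open neighborhoods of the vertices of `X`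
in `G` are linearly ordered by inclusion, i.e. `G` is threshold bipartite. -/
theorem max_d2_is_threshold_bipartite {V : Type*} [Fintype V] (X Y : Set V)
    (hdisj : Disjoint X Y) (hcover : X ∪ Y = Set.univ)
    (𝒢 : Set (SimpleGraph V))
    (hbip : ∀ G' ∈ 𝒢, ∀ a b : V, G'.Adj a b → (a ∈ X ∧ b ∈ Y) ∨ (a ∈ Y ∧ b ∈ X))
    (hclosed : ∀ G' ∈ 𝒢, ∀ u ∈ X, ∀ v ∈ X, compress G' u v ∈ 𝒢)
    (G : SimpleGraph V) (hG : G ∈ 𝒢) (hmax : ∀ G' ∈ 𝒢, d2 G' ≤ d2 G) :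
    ∀ u ∈ X, ∀ v ∈ X, G.neighborSet u ⊆ G.neighborSet v ∨ G.neighborSet v ⊆ G.neighborSet u :=
  max_d2_is_threshold_bipartite_general X Y hdisj 𝒢 hbip hclosed G hG hmax
end

section
/- Let B be a Young diagram in an ℓ×r frame and let P ∈ B be such that the transpose of B at P is legal. Then m_k(B*_P) = m_k(B) for every k ≥ 0; that is, a legal transpose preserves the number of matchings of every size. -/
open Classical

/-- `B` is a Young diagram in an `ℓ × r` frame: every box lies in
`{1,…,ℓ} × {1,…,r}`, and boxes are closed under moving up and to the left. -/
def IsYoung (ℓ r : ℕ) (B : Finset (ℕ × ℕ)) : Prop :=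
  (∀ p ∈ B, 1 ≤ p.1 ∧ p.1 ≤ ℓ ∧ 1 ≤ p.2 ∧ p.2 ≤ r) ∧
  (∀ p ∈ B, 1 < p.1 → (p.1 - 1, p.2) ∈ B) ∧
  (∀ p ∈ B, 1 < p.2 → (p.1, p.2 - 1) ∈ B)

/-- The matchings of a Young diagram `B`: subsets of `B` in which all first coordinates
are distinct and all second coordinates are distinct (placements of non-attacking rooks). -/
noncomputable def ydMatchings (B : Finset (ℕ × ℕ)) : Finset (Finset (ℕ × ℕ)) :=
  B.powerset.filter fun M => ∀ p ∈ M, ∀ q ∈ M, p ≠ q → p.1 ≠ q.1 ∧ p.2 ≠ q.2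

/-- `m(B)`: the total number of matchings of the Young diagram `B`. -/
noncomputable def ydM (B : Finset (ℕ × ℕ)) : ℕ := (ydMatchings B).card

/-- `m_k(B)`: the number of size-`k` matchings of the Young diagram `B`. -/
noncomputable def ydMk (B : Finset (ℕ × ℕ)) (k : ℕ) : ℕ :=
  ((ydMatchings B).filter fun M => M.card = k).card

/-- `P` is an out-corner of the Young diagram `B` in the `ℓ × r` frame. -/
def OutCorner (ℓ r : ℕ) (B : Finset (ℕ × ℕ)) (P : ℕ × ℕ) : Prop :=
  P ∈ B ∧ IsYoung ℓ r (B.erase P)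

/-- `Q` is an in-corner of the Young diagram `B` in the `ℓ × r` frame. -/
def InCorner (ℓ r : ℕ) (B : Finset (ℕ × ℕ)) (Q : ℕ × ℕ) : Prop :=
  Q ∉ B ∧ IsYoung ℓ r (insert Q B)

/-- The transpose of `B` at `P = (i,j)`:
`B*_P = {(a,b) ∈ B : a < i or b < j} ∪ {(b-j+i, a-i+j) : (a,b) ∈ B, a ≥ i, b ≥ j}`. -/
noncomputable def transposeAt (B : Finset (ℕ × ℕ)) (i j : ℕ) : Finset (ℕ × ℕ) :=
  B.filter (fun p => p.1 < i ∨ p.2 < j) ∪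
    (B.filter fun p => i ≤ p.1 ∧ j ≤ p.2).image fun p => (p.2 - j + i, p.1 - i + j)

/-!
Goldman–Joichi–White: if `B` has column heights `c_1 ≥ ⋯ ≥ c_r`, then
`∑_k m_k(B) · (y + r)_(r - k) = ∏_b (y + c_b + b)`, where `(x)_n` is the falling factorial.
Add the columns from right to left: a column of height `c` covering every row used by the `n`
columns to its right extends a size-`k` matching of those columns in `1 + (c - k)` ways, and
`(x)_(n + 1 - k) + (c - k) · (x)_(n - k) = (x + c - n) · (x)_(n - k)`.

The product depends only on the multiset `{c_b + b}`, and a legal transpose preserves it: removing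
a corner `(a, b)` of the quadrant below and to the right of `P = (i, j)` from `B`, and its image
`(b - j + i, a - i + j)` from `B*_P`, lowers one entry `a + b` of each multiset to `a + b - 1`, so
induction on `|B|` reduces to a quadrant `{P}`, where `B*_P = B`. As the falling factorials are
linearly independent, the `m_k` are determined by the product.
-/

open Finset

section Matchings

variable {D M : Finset (ℕ × ℕ)}

lemma mem_ydMatchings :
    M ∈ ydMatchings D ↔ M ⊆ D ∧ ∀ p ∈ M, ∀ q ∈ M, p ≠ q → p.1 ≠ q.1 ∧ p.2 ≠ q.2 := by
  simp [ydMatchings]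

lemma injOn_fst_of_mem_ydMatchings (hM : M ∈ ydMatchings D) :
    Set.InjOn Prod.fst (M : Set (ℕ × ℕ)) :=
  fun p hp q hq h => by_contra fun hne => ((mem_ydMatchings.1 hM).2 p hp q hq hne).1 h

lemma injOn_snd_of_mem_ydMatchings (hM : M ∈ ydMatchings D) :
    Set.InjOn Prod.snd (M : Set (ℕ × ℕ)) :=
  fun p hp q hq h => by_contra fun hne => ((mem_ydMatchings.1 hM).2 p hp q hq hne).2 h

lemma card_le_of_mem_ydMatchings_of_fst_mem {S : Finset ℕ} (hM : M ∈ ydMatchings D)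
    (hS : ∀ p ∈ D, p.1 ∈ S) : #M ≤ #S :=
  card_le_card_of_injOn _ (fun p hp => hS p ((mem_ydMatchings.1 hM).1 hp))
    (injOn_fst_of_mem_ydMatchings hM)

lemma card_le_of_mem_ydMatchings_of_snd_mem {S : Finset ℕ} (hM : M ∈ ydMatchings D)
    (hS : ∀ p ∈ D, p.2 ∈ S) : #M ≤ #S :=
  card_le_card_of_injOn _ (fun p hp => hS p ((mem_ydMatchings.1 hM).1 hp))
    (injOn_snd_of_mem_ydMatchings hM)

lemma insert_filter_snd_ne_eq_of_mem_ydMatchings (hM : M ∈ ydMatchings D) {a s : ℕ}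
    (ha : (a, s) ∈ M) : insert (a, s) (M.filter (·.2 ≠ s)) = M := by
  ext q
  by_cases hqs : q.2 = s
  · have hq : q ∈ M → q = (a, s) := fun hq =>
      by_contra fun hne => ((mem_ydMatchings.1 hM).2 q hq _ ha hne).2 hqs
    simp only [mem_insert, mem_filter, hqs, ne_eq, not_true_eq_false, and_false, or_false]
    exact ⟨fun h => h ▸ ha, hq⟩
  · simpa [hqs] using fun h => h ▸ ha

variable {R : Finset ℕ} {s : ℕ}

lemma filter_snd_ne_mem_ydMatchings (hM : M ∈ ydMatchings (D ∪ R ×ˢ {s})) :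
    M.filter (·.2 ≠ s) ∈ ydMatchings D := by
  rw [mem_ydMatchings] at hM ⊢
  refine ⟨fun p hp => ?_, fun p hp q hq => hM.2 p (mem_filter.1 hp).1 q (mem_filter.1 hq).1⟩
  obtain ⟨hpM, hps⟩ := mem_filter.1 hp
  exact (mem_union.1 (hM.1 hpM)).resolve_right fun h => hps (mem_singleton.1 (mem_product.1 h).2)

lemma insert_mem_ydMatchings_union_column (hD : ∀ p ∈ D, p.1 ∈ R ∧ p.2 ≠ s)
    (hM : M ∈ ydMatchings D) {a : ℕ} (haR : a ∈ R) (ha : a ∉ M.image Prod.fst) :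
    insert (a, s) M ∈ ydMatchings (D ∪ R ×ˢ {s}) := by
  obtain ⟨hMD, hMm⟩ := mem_ydMatchings.1 hM
  have ha' : ∀ p ∈ M, p.1 ≠ a := fun p hp h => ha (mem_image.2 ⟨p, hp, h⟩)
  refine mem_ydMatchings.2 ⟨insert_subset (mem_union_right _ (mem_product.2
    ⟨haR, mem_singleton_self s⟩)) (hMD.trans subset_union_left), ?_⟩
  simp only [mem_insert]
  rintro p (rfl | hp) q (rfl | hq) hpq
  · exact absurd rfl hpq
  · exact ⟨(ha' q hq).symm, ((hD q (hMD hq)).2).symm⟩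
  · exact ⟨ha' p hp, (hD p (hMD hp)).2⟩
  · exact hMm p hp q hq hpq

lemma filter_ydMatchings_union_column (hD : ∀ p ∈ D, p.1 ∈ R ∧ p.2 ≠ s)
    (hM : M ∈ ydMatchings D) :
    {M' ∈ ydMatchings (D ∪ R ×ˢ {s}) | M'.filter (·.2 ≠ s) = M} =
      insert M ((R \ M.image Prod.fst).image fun a => insert (a, s) M) := by
  have hMD := (mem_ydMatchings.1 hM).1
  have hfilter : M.filter (·.2 ≠ s) = M := filter_true_of_mem fun p hp => (hD p (hMD hp)).2
  ext M'
  simp only [mem_filter, mem_insert, mem_image, mem_sdiff]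
  constructor
  · rintro ⟨hM', rfl⟩
    obtain ⟨hM'D, hM'm⟩ := mem_ydMatchings.1 hM'
    by_cases h : ∃ a, (a, s) ∈ M'
    · obtain ⟨a, ha⟩ := h
      refine Or.inr ⟨a, ⟨?_, ?_⟩, insert_filter_snd_ne_eq_of_mem_ydMatchings hM' ha⟩
      · exact (mem_product.1 ((mem_union.1 (hM'D ha)).resolve_left fun h => (hD _ h).2 rfl)).1
      · rintro ⟨q, hq, rfl⟩
        obtain ⟨hqM, hqs⟩ := mem_filter.1 hq
        exact (hM'm q hqM _ ha fun h => hqs (h ▸ rfl)).1 rfl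
    · push Not at h
      left
      rw [filter_true_of_mem]
      exact fun q hq hqs => h q.1 (by rw [← hqs]; exact hq)
  · rintro (rfl | ⟨a, ⟨haR, ha⟩, rfl⟩)
    · exact ⟨mem_ydMatchings.2 ⟨hMD.trans subset_union_left, (mem_ydMatchings.1 hM).2⟩, hfilter⟩
    · refine ⟨insert_mem_ydMatchings_union_column hD hM haR (by simpa using ha), ?_⟩
      rw [filter_insert, if_neg (by simp), hfilter]

theorem sum_ydMatchings_union_column (hD : ∀ p ∈ D, p.1 ∈ R ∧ p.2 ≠ s) (f : ℕ → ℕ) :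
    ∑ M ∈ ydMatchings (D ∪ R ×ˢ {s}), f #M =
      ∑ M ∈ ydMatchings D, (f #M + (#R - #M) * f (#M + 1)) := by
  rw [← sum_fiberwise_of_maps_to fun M hM => filter_snd_ne_mem_ydMatchings hM]
  refine sum_congr rfl fun M hM => ?_
  have hcol : ∀ a, (a, s) ∉ M := fun a h => (hD _ ((mem_ydMatchings.1 hM).1 h)).2 rfl
  have hrows : M.image Prod.fst ⊆ R := fun a ha => by
    obtain ⟨p, hp, rfl⟩ := mem_image.1 ha
    exact (hD p ((mem_ydMatchings.1 hM).1 hp)).1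
  rw [filter_ydMatchings_union_column hD hM, sum_insert, sum_image,
    sum_congr rfl fun a _ => by rw [card_insert_of_notMem (hcol a)], sum_const, smul_eq_mul,
    card_sdiff_of_subset hrows, card_image_of_injOn (injOn_fst_of_mem_ydMatchings hM)]
  · intro a _ b _ hab
    simpa [hcol] using (Finset.ext_iff.1 hab (a, s)).1 (mem_insert_self _ _)
  · simp only [mem_image, not_exists, not_and]
    exact fun a _ h => hcol a (h ▸ mem_insert_self _ _)

end Matchings

noncomputable def colHeight (B : Finset (ℕ × ℕ)) (b : ℕ) : ℕ := #{p ∈ B | p.2 = b}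

noncomputable def colSums (r : ℕ) (B : Finset (ℕ × ℕ)) : Multiset ℕ :=
  (Icc 1 r).val.map fun b => colHeight B b + b

section ColumnHeights

variable {B : Finset (ℕ × ℕ)} {a b : ℕ}

lemma colHeight_erase_self (hab : (a, b) ∈ B) :
    colHeight (B.erase (a, b)) b = colHeight B b - 1 := by
  rw [colHeight, colHeight, filter_erase,
    card_erase_of_mem (s := {p ∈ B | p.2 = b}) (mem_filter.2 ⟨hab, rfl⟩)]

lemma colHeight_erase_of_ne {b' : ℕ} (hb : b' ≠ b) :
    colHeight (B.erase (a, b)) b' = colHeight B b' := by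
  rw [colHeight, colHeight, filter_erase, erase_eq_of_notMem fun h => hb (mem_filter.1 h).2.symm]

lemma colSums_erase_add {r : ℕ} (hab : (a, b) ∈ B) (hb : b ∈ Icc 1 r) :
    colSums r (B.erase (a, b)) + {colHeight B b + b} =
      colSums r B + {colHeight B b + b - 1} := by
  have hpos : 0 < colHeight B b := card_pos.2 ⟨(a, b), mem_filter.2 ⟨hab, rfl⟩⟩
  have hsplit : (Icc 1 r).val = b ::ₘ ((Icc 1 r).erase b).val := by
    rw [erase_val, Multiset.cons_erase hb]
  have htail : ((Icc 1 r).erase b).val.map (fun b' => colHeight (B.erase (a, b)) b' + b') =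
      ((Icc 1 r).erase b).val.map (fun b' => colHeight B b' + b') :=
    Multiset.map_congr rfl fun b' hb' => by
      rw [colHeight_erase_of_ne (mem_erase.1 (mem_val.mp hb')).1]
  rw [colSums, colSums, hsplit, Multiset.map_cons, Multiset.map_cons, htail,
    colHeight_erase_self hab, show colHeight B b - 1 + b = colHeight B b + b - 1 by omega,
    add_comm _ {_}, add_comm _ {_}, Multiset.singleton_add, Multiset.singleton_add,
    Multiset.cons_swap]

end ColumnHeights

section Transpose

variable {B : Finset (ℕ × ℕ)} {i j u v : ℕ}

lemma mem_transposeAt_of_lt (h : u < i ∨ v < j) : (u, v) ∈ transposeAt B i j ↔ (u, v) ∈ B := by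
  simp only [transposeAt, mem_union, mem_filter, mem_image, Prod.mk.injEq]
  constructor
  · rintro (⟨h, -⟩ | ⟨p, ⟨-, hp⟩, hu, hv⟩) <;> omega
  · exact fun hB => Or.inl ⟨hB, h⟩

lemma mem_transposeAt_of_le (hu : i ≤ u) (hv : j ≤ v) :
    (u, v) ∈ transposeAt B i j ↔ (v - j + i, u - i + j) ∈ B := by
  simp only [transposeAt, mem_union, mem_filter, mem_image, Prod.mk.injEq]
  constructor
  · rintro (⟨-, h⟩ | ⟨p, ⟨hp, hpi, hpj⟩, hu, hv⟩)
    · omega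
    · convert hp using 2 <;> omega
  · exact fun h => Or.inr ⟨_, ⟨h, by omega, by omega⟩, by omega, by omega⟩

lemma transposeAt_eq_self (hP : (i, j) ∈ B) (hQ : ∀ p ∈ B, i ≤ p.1 → j ≤ p.2 → p = (i, j)) :
    transposeAt B i j = B := by
  ext ⟨u, v⟩
  by_cases h : u < i ∨ v < j
  · exact mem_transposeAt_of_lt h
  rw [mem_transposeAt_of_le (by omega) (by omega)]
  constructor
  · intro hq
    have := Prod.ext_iff.1 (hQ _ hq (by omega) (by omega))
    simp only at this
    convert hP using 2 <;> omega
  · intro huv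
    have := Prod.ext_iff.1 (hQ _ huv (by omega) (by omega))
    simp only at this
    convert hP using 2 <;> omega

lemma transposeAt_erase {a b : ℕ} (ha : i ≤ a) (hb : j ≤ b) :
    transposeAt (B.erase (a, b)) i j = (transposeAt B i j).erase (b - j + i, a - i + j) := by
  ext ⟨u, v⟩
  rw [mem_erase]
  by_cases h : u < i ∨ v < j
  · rw [mem_transposeAt_of_lt h, mem_transposeAt_of_lt h, mem_erase, ne_eq, ne_eq,
      Prod.ext_iff, Prod.ext_iff]
    exact and_congr_left' (by omega)
  · rw [mem_transposeAt_of_le (by omega) (by omega), mem_transposeAt_of_le (by omega) (by omega),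
      mem_erase, ne_eq, ne_eq, Prod.ext_iff, Prod.ext_iff]
    exact and_congr_left' (by omega)

lemma exists_corner_of_ne (h : ∃ p ∈ B, i ≤ p.1 ∧ j ≤ p.2 ∧ p ≠ (i, j)) :
    ∃ a b, (a, b) ∈ B ∧ i ≤ a ∧ j ≤ b ∧ (a, b) ≠ (i, j) ∧ (a + 1, b) ∉ B ∧ (a, b + 1) ∉ B := by
  obtain ⟨⟨a, b⟩, hp, hmax⟩ := exists_max_image {p ∈ B | i ≤ p.1 ∧ j ≤ p.2 ∧ p ≠ (i, j)}
    (fun p => p.1 + p.2) (by simpa [Finset.Nonempty] using h)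
  obtain ⟨hab, hia, hjb, hne⟩ := mem_filter.1 hp
  refine ⟨a, b, hab, hia, hjb, hne, fun h => ?_, fun h => ?_⟩
  · have := hmax (a + 1, b) (mem_filter.2 ⟨h, by simp only; omega, hjb, by simp; omega⟩)
    simp only at this
    omega
  · have := hmax (a, b + 1) (mem_filter.2 ⟨h, hia, by simp only; omega, by simp; omega⟩)
    simp only at this
    omega

end Transpose

namespace IsYoung

variable {ℓ r : ℕ} {B : Finset (ℕ × ℕ)}

lemma mem_of_le_fst (hB : IsYoung ℓ r B) {a a' b : ℕ} (h : (a, b) ∈ B) (h1 : 1 ≤ a')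
    (h2 : a' ≤ a) : (a', b) ∈ B := by
  induction a, h2 using Nat.le_induction with
  | base => exact h
  | succ n _ ih => exact ih (by simpa using hB.2.1 _ h (by simp; omega))

lemma mem_of_le_snd (hB : IsYoung ℓ r B) {a b b' : ℕ} (h : (a, b) ∈ B) (h1 : 1 ≤ b')
    (h2 : b' ≤ b) : (a, b') ∈ B := by
  induction b, h2 using Nat.le_induction with
  | base => exact h
  | succ n _ ih => exact ih (by simpa using hB.2.2 _ h (by simp; omega))

lemma mem_iff_le_colHeight (hB : IsYoung ℓ r B) {a b : ℕ} :
    (a, b) ∈ B ↔ 1 ≤ a ∧ a ≤ colHeight B b := by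
  set S := {p ∈ B | p.2 = b}.image Prod.fst
  have hS : ∀ a, a ∈ S ↔ (a, b) ∈ B := by simp [S]
  have hcard : #S = colHeight B b := card_image_of_injOn fun p hp q hq h =>
    Prod.ext h ((mem_filter.1 hp).2.trans (mem_filter.1 hq).2.symm)
  have hsub : S ⊆ Icc 1 #S := fun a ha => by
    have hIcc : Icc 1 a ⊆ S := fun a' ha' =>
      (hS a').2 (hB.mem_of_le_fst ((hS a).1 ha) (mem_Icc.1 ha').1 (mem_Icc.1 ha').2)
    have := card_le_card hIcc
    simp only [Nat.card_Icc, add_tsub_cancel_right] at this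
    exact mem_Icc.2 ⟨(hB.1 _ ((hS a).1 ha)).1, this⟩
  rw [← hS, eq_of_subset_of_card_le hsub (by simp), mem_Icc, hcard]

lemma colHeight_eq_of_succ_notMem (hB : IsYoung ℓ r B) {a b : ℕ} (hab : (a, b) ∈ B)
    (h : (a + 1, b) ∉ B) : colHeight B b = a := by
  rw [hB.mem_iff_le_colHeight] at hab h
  omega

lemma erase {a b : ℕ} (hB : IsYoung ℓ r B) (ha : (a + 1, b) ∉ B) (hb : (a, b + 1) ∉ B) :
    IsYoung ℓ r (B.erase (a, b)) := by
  refine ⟨fun p hp => hB.1 p (mem_of_mem_erase hp), fun p hp h1 => ?_, fun p hp h1 => ?_⟩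
  · have hpB := mem_of_mem_erase hp
    refine mem_erase.2 ⟨fun h => ha ?_, hB.2.1 p hpB h1⟩
    convert hpB using 1
    simp only [Prod.ext_iff] at h ⊢
    omega
  · have hpB := mem_of_mem_erase hp
    refine mem_erase.2 ⟨fun h => hb ?_, hB.2.2 p hpB h1⟩
    convert hpB using 1
    simp only [Prod.ext_iff] at h ⊢
    omega

theorem colSums_transposeAt {i j : ℕ} (hB : IsYoung ℓ r B) (hP : (i, j) ∈ B)
    (hlegal : IsYoung ℓ r (transposeAt B i j)) :
    colSums r (transposeAt B i j) = colSums r B := by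
  induction hn : #B using Nat.strong_induction_on generalizing B with
  | _ n ih =>
  by_cases hQ : ∀ p ∈ B, i ≤ p.1 → j ≤ p.2 → p = (i, j)
  · rw [transposeAt_eq_self hP hQ]
  obtain ⟨a, b, hab, hia, hjb, hne, ha, hb⟩ :=
    exists_corner_of_ne (by push Not at hQ; exact hQ)
  have hT : (b - j + i, a - i + j) ∈ transposeAt B i j := by
    rw [mem_transposeAt_of_le (by omega) (by omega)]
    convert hab using 2 <;> omega
  have hTa : (b - j + i + 1, a - i + j) ∉ transposeAt B i j := by
    rw [mem_transposeAt_of_le (by omega) (by omega)]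
    convert hb using 3 <;> omega
  have hTb : (b - j + i, a - i + j + 1) ∉ transposeAt B i j := by
    rw [mem_transposeAt_of_le (by omega) (by omega)]
    convert ha using 3 <;> omega
  have hIH := ih (n - 1) (by have := card_pos.2 ⟨_, hab⟩; omega) (hB.erase ha hb)
    (mem_erase.2 ⟨hne.symm, hP⟩) (transposeAt_erase hia hjb ▸ hlegal.erase hTa hTb)
    (by rw [card_erase_of_mem hab, hn])
  rw [transposeAt_erase hia hjb] at hIH
  have hBs := colSums_erase_add (r := r) hab (by have := hB.1 _ hab; simp only [mem_Icc]; omega)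
  have hTs := colSums_erase_add (r := r) hT (by have := hlegal.1 _ hT; simp only [mem_Icc]; omega)
  rw [hB.colHeight_eq_of_succ_notMem hab ha] at hBs
  rw [hlegal.colHeight_eq_of_succ_notMem hT hTa, show b - j + i + (a - i + j) = a + b by omega,
    hIH, hBs] at hTs
  exact (add_right_cancel hTs).symm

lemma card_le_of_mem_ydMatchings (hB : IsYoung ℓ r B) {M : Finset (ℕ × ℕ)}
    (hM : M ∈ ydMatchings B) : #M ≤ r := by
  simpa using card_le_of_mem_ydMatchings_of_snd_mem (S := Icc 1 r) hM fun p hp => by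
    have := hB.1 p hp
    simp only [mem_Icc]
    omega

lemma ydMk_eq_zero (hB : IsYoung ℓ r B) {k : ℕ} (hk : r < k) : ydMk B k = 0 :=
  card_eq_zero.2 (filter_eq_empty_iff.2 fun M hM h => by
    have := hB.card_le_of_mem_ydMatchings hM
    omega)

lemma sum_ydMatchings_eq_sum_ydMk (hB : IsYoung ℓ r B) (f : ℕ → ℕ) :
    ∑ M ∈ ydMatchings B, f #M = ∑ k ∈ range (r + 1), ydMk B k * f k := by
  rw [← sum_fiberwise_of_maps_to fun M hM =>
    mem_range.2 (Nat.lt_succ_of_le (hB.card_le_of_mem_ydMatchings hM))]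
  refine sum_congr rfl fun k _ => ?_
  rw [ydMk, sum_congr rfl fun M hM => by rw [(mem_filter.1 hM).2], sum_const, smul_eq_mul]

lemma filter_lt_snd_eq_union (hB : IsYoung ℓ r B) (t : ℕ) :
    {p ∈ B | t < p.2} = {p ∈ B | t + 1 < p.2} ∪ Icc 1 (colHeight B (t + 1)) ×ˢ {t + 1} := by
  ext ⟨a, b⟩
  simp only [mem_union, mem_filter, mem_product, mem_Icc, mem_singleton,
    ← hB.mem_iff_le_colHeight]
  constructor
  · rintro ⟨h, ht⟩
    rcases (show t + 1 < b ∨ b = t + 1 by omega) with h' | rfl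
    exacts [Or.inl ⟨h, h'⟩, Or.inr ⟨h, rfl⟩]
  · rintro (⟨h, ht⟩ | ⟨h, rfl⟩)
    exacts [⟨h, by omega⟩, ⟨h, by omega⟩]

theorem sum_descFactorial_ydMatchings_filter_lt_snd (hB : IsYoung ℓ r B) (y : ℕ) {t d : ℕ}
    (htd : t + d = r) :
    ∑ M ∈ ydMatchings {p ∈ B | t < p.2}, (y + r).descFactorial (d - #M) =
      ∏ b ∈ Icc (t + 1) r, (y + (colHeight B b + b)) := by
  induction d generalizing t with
  | zero =>
    have : {p ∈ B | t < p.2} = ∅ := filter_eq_empty_iff.2 fun p hp => by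
      have := hB.1 p hp
      omega
    simp [this, ydMatchings, filter_singleton, show r < t + 1 by omega]
  | succ d ih =>
    have hcover : ∀ p ∈ {p ∈ B | t + 1 < p.2},
        p.1 ∈ Icc 1 (colHeight B (t + 1)) ∧ p.2 ≠ t + 1 := fun p hp => by
      obtain ⟨hpB, hpt⟩ := mem_filter.1 hp
      refine ⟨mem_Icc.2 (hB.mem_iff_le_colHeight.1 (hB.mem_of_le_snd hpB ?_ ?_)), ?_⟩ <;> omega
    rw [hB.filter_lt_snd_eq_union,
      sum_ydMatchings_union_column hcover fun k => (y + r).descFactorial (d + 1 - k),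
      ← insert_Icc_add_one_left_eq_Icc (show t + 1 ≤ r by omega), prod_insert (by simp),
      ← ih (by omega), mul_sum]
    refine sum_congr rfl fun M hM => ?_
    have hMd : #M ≤ d := by
      simpa [show r + 1 - (t + 1 + 1) = d by omega] using
        card_le_of_mem_ydMatchings_of_snd_mem (S := Icc (t + 1 + 1) r) hM fun p hp => by
          have := hB.1 p (mem_filter.1 hp).1
          have := (mem_filter.1 hp).2
          simp only [mem_Icc]
          omega
    have hMc : #M ≤ colHeight B (t + 1) := by
      simpa using card_le_of_mem_ydMatchings_of_fst_mem hM fun p hp => (hcover p hp).1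
    rw [Nat.card_Icc, show d + 1 - (#M + 1) = d - #M by omega,
      show d + 1 - #M = d - #M + 1 by omega, Nat.descFactorial_succ, ← add_mul]
    congr 1
    omega

theorem sum_descFactorial_ydMatchings (hB : IsYoung ℓ r B) (y : ℕ) :
    ∑ M ∈ ydMatchings B, (y + r).descFactorial (r - #M) = ((colSums r B).map (y + ·)).prod := by
  have h := hB.sum_descFactorial_ydMatchings_filter_lt_snd y (zero_add r)
  rw [filter_true_of_mem (p := fun q => 0 < q.2) fun p hp => (hB.1 p hp).2.2.1, zero_add] at h
  rw [h, colSums, Multiset.map_map, ← prod_map_val]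
  rfl

end IsYoung

open Polynomial in
lemma eq_of_forall_sum_mul_descFactorial_eq {n N : ℕ} {a b : ℕ → ℕ}
    (h : ∀ y, ∑ k ∈ range (n + 1), a k * (y + N).descFactorial (n - k) =
      ∑ k ∈ range (n + 1), b k * (y + N).descFactorial (n - k))
    {k : ℕ} (hk : k ≤ n) : a k = b k := by
  let S : Sequence ℤ := ⟨descPochhammer ℤ, fun m => by
    rw [degree_eq_natDegree (monic_descPochhammer ℤ m).ne_zero, descPochhammer_natDegree]⟩
  have hind : LinearIndependent ℤ fun m : Fin (n + 1) => descPochhammer ℤ (n - m) :=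
    S.linearIndependent.comp _ fun m m' hm => Fin.ext (by have := m.isLt; have := m'.isLt; omega)
  set P : ℤ[X] := ∑ m : Fin (n + 1), ((a m : ℤ) - b m) • descPochhammer ℤ (n - m)
  have hroot : ∀ y : ℕ, P.IsRoot ((y + N : ℕ) : ℤ) := fun y => by
    have := congrArg (Nat.cast : ℕ → ℤ) (h y)
    push_cast at this
    simp only [P, IsRoot, eval_finsetSum, eval_smul, descPochhammer_eval_eq_descFactorial,
      smul_eq_mul, sub_mul, sum_sub_distrib,
      Fin.sum_univ_eq_sum_range (fun m => (a m : ℤ) * ((y + N).descFactorial (n - m) : ℤ)),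
      Fin.sum_univ_eq_sum_range (fun m => (b m : ℤ) * ((y + N).descFactorial (n - m) : ℤ))]
    rw [this, sub_self]
  have hP : P = 0 := eq_zero_of_infinite_isRoot P <|
    Set.infinite_of_injective_forall_mem (fun y y' h => by simpa using h) hroot
  have := Fintype.linearIndependent_iff.1 hind _ hP ⟨k, by omega⟩
  simp only [sub_eq_zero] at this
  exact_mod_cast this

/-- A legal transpose of a Young diagram preserves the number of matchings of every
size: if `B` is a Young diagram in an `ℓ × r` frame, `(i,j) ∈ B`, and the transpose of
`B` at `(i,j)` is again a Young diagram in the frame, then `m_k(B*_{(i,j)}) = m_k(B)`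
for every `k`. -/
theorem transpose_preserves_matchings (ℓ r : ℕ) (B : Finset (ℕ × ℕ)) (hB : IsYoung ℓ r B)
    (i j : ℕ) (hP : (i, j) ∈ B) (hlegal : IsYoung ℓ r (transposeAt B i j)) :
    ∀ k : ℕ, ydMk (transposeAt B i j) k = ydMk B k := by
  intro k
  rcases le_or_gt k r with hk | hk
  · refine eq_of_forall_sum_mul_descFactorial_eq (N := r) (fun y => ?_) hk
    rw [← hlegal.sum_ydMatchings_eq_sum_ydMk, ← hB.sum_ydMatchings_eq_sum_ydMk,
      hlegal.sum_descFactorial_ydMatchings, hB.sum_descFactorial_ydMatchings,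
      hB.colSums_transposeAt hP hlegal]
  · rw [hlegal.ydMk_eq_zero hk, hB.ydMk_eq_zero hk]
end
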